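/- Let X be a real Hilbert space, let m ≥ 2, for each i ∈ {1,…,m} let T_i : X → X be firmly nonexpansive, and let λ_1,…,λ_m ∈ (0,1] with ∑_{i=1}^m λ_i = 1. Set T̄ = ∑_{i=1}^m λ_i T_i. Then the closure of the range of Id − T̄ equals the closure of the Minkowski sum ∑_{i=1}^m λ_i • ran(Id − T_i). -/

import Mathlib

open Finset

/-!
Write `Aᵢ = Id - Tᵢ`, which is again firmly nonexpansive, and `w = ∑ λᵢ Aᵢ zᵢ`. Since
`∑ λᵢ Tᵢ` is nonexpansive, the regularised equation `∑ λᵢ Aᵢ x + ε x = w` has a solution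
`x = x_ε` (a Banach fixed point), and `w - ∑ λᵢ Aᵢ x_ε = ε x_ε`. Testing the equation against
`x_ε` and using firm nonexpansiveness of each `Aᵢ` gives `ε ‖x_ε‖² ≤ ∑ λᵢ ‖zᵢ‖² / 4`, so
`‖ε x_ε‖² = O(ε)` and `w` lies in the closure of the range of `∑ λᵢ Aᵢ = Id - T̄`.
-/

section FirmlyNonexpansive

variable {X : Type*} [NormedAddCommGroup X] [InnerProductSpace ℝ X]

def FirmlyNonexpansive (T : X → X) : Prop :=
  ∀ x y, ‖T x - T y‖ ^ 2 ≤ (inner ℝ (x - y) (T x - T y) : ℝ)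

namespace FirmlyNonexpansive

variable {T : X → X}

theorem norm_sub_le (hT : FirmlyNonexpansive T) (x y : X) : ‖T x - T y‖ ≤ ‖x - y‖ := by
  have h := (hT x y).trans (real_inner_le_norm _ _)
  rcases (norm_nonneg (T x - T y)).eq_or_lt with h0 | h0
  · rw [← h0]; exact norm_nonneg _
  · nlinarith

theorem lipschitzWith (hT : FirmlyNonexpansive T) : LipschitzWith 1 T :=
  LipschitzWith.of_dist_le_mul fun x y => by
    simpa [dist_eq_norm] using hT.norm_sub_le x y

theorem id_sub (hT : FirmlyNonexpansive T) : FirmlyNonexpansive fun x => x - T x := by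
  intro x y
  have h := hT x y
  have hsplit : x - T x - (y - T y) = (x - y) - (T x - T y) := by abel
  rw [hsplit, norm_sub_sq_real, inner_sub_right (x - y) (x - y), real_inner_self_eq_norm_sq]
  linarith

/-- Completing the square in `‖v‖² ≤ ⟪x - z, v⟫ ≤ ⟪x, v⟫ + ‖z‖ ‖v‖` for `v = T x - T z`. -/
theorem neg_sq_div_four_le_inner (hT : FirmlyNonexpansive T) (x z : X) :
    -(‖z‖ ^ 2 / 4) ≤ (inner ℝ x (T x - T z) : ℝ) := by
  have h := hT x z
  rw [inner_sub_left] at h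
  have hz := (abs_le.1 (abs_real_inner_le_norm z (T x - T z))).1
  nlinarith [sq_nonneg (‖T x - T z‖ - ‖z‖ / 2)]

end FirmlyNonexpansive

variable {ι : Type*} {s : Finset ι}

theorem smul_norm_sq_le_of_sum_smul_add_smul_eq {A : ι → X → X}
    (hA : ∀ i ∈ s, FirmlyNonexpansive (A i)) {lam : ι → ℝ} (hlam : ∀ i ∈ s, 0 ≤ lam i)
    {z : ι → X} {x : X} {ε : ℝ}
    (hx : ∑ i ∈ s, lam i • A i x + ε • x = ∑ i ∈ s, lam i • A i (z i)) :
    ε * ‖x‖ ^ 2 ≤ ∑ i ∈ s, lam i * (‖z i‖ ^ 2 / 4) := by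
  have hεx : ε • x = -∑ i ∈ s, lam i • (A i x - A i (z i)) := by
    simp only [smul_sub, sum_sub_distrib]
    rw [← hx]; abel
  have hinner : ε * ‖x‖ ^ 2 = -∑ i ∈ s, lam i * (inner ℝ x (A i x - A i (z i)) : ℝ) := by
    rw [← real_inner_self_eq_norm_sq, ← real_inner_smul_right, hεx, inner_neg_right,
      inner_sum]
    simp only [real_inner_smul_right]
  rw [hinner, neg_le, ← sum_neg_distrib]
  refine sum_le_sum fun i hi => ?_
  rw [← mul_neg]
  exact mul_le_mul_of_nonneg_left ((hA i hi).neg_sq_div_four_le_inner x (z i)) (hlam i hi)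

end FirmlyNonexpansive

section Nonexpansive

variable {E : Type*} [NormedAddCommGroup E] [NormedSpace ℝ E]

theorem LipschitzWith.sum_smul_of_sum_eq_one {ι : Type*} {s : Finset ι} {K : NNReal}
    {f : ι → E → E} (hf : ∀ i ∈ s, LipschitzWith K (f i)) {lam : ι → ℝ}
    (hlam : ∀ i ∈ s, 0 ≤ lam i) (hsum : ∑ i ∈ s, lam i = 1) :
    LipschitzWith K fun x => ∑ i ∈ s, lam i • f i x := by
  refine LipschitzWith.of_dist_le_mul fun x y => ?_
  rw [dist_eq_norm, dist_eq_norm, ← sum_sub_distrib]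
  calc ‖∑ i ∈ s, (lam i • f i x - lam i • f i y)‖
      ≤ ∑ i ∈ s, lam i * (K * ‖x - y‖) := by
        refine (norm_sum_le _ _).trans (sum_le_sum fun i hi => ?_)
        rw [← smul_sub, norm_smul, Real.norm_of_nonneg (hlam i hi), ← dist_eq_norm,
          ← dist_eq_norm]
        exact mul_le_mul_of_nonneg_left ((hf i hi).dist_le_mul x y) (hlam i hi)
    _ = K * ‖x - y‖ := by rw [← sum_mul, hsum, one_mul]

/-- The solution is the fixed point of the contraction `x ↦ (1 + ε)⁻¹ • (w + S x)`. -/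
theorem LipschitzWith.exists_sub_add_smul_eq [CompleteSpace E] {S : E → E}
    (hS : LipschitzWith 1 S) {ε : ℝ} (hε : 0 < ε) (w : E) : ∃ x, x - S x + ε • x = w := by
  have hpos : 0 < 1 + ε := by linarith
  have hG : ContractingWith ⟨(1 + ε)⁻¹, by positivity⟩ fun x => (1 + ε)⁻¹ • (w + S x) := by
    refine ⟨inv_lt_one_of_one_lt₀ (by linarith : (1 : ℝ) < 1 + ε), ?_⟩
    refine LipschitzWith.of_dist_le_mul fun x y => ?_
    rw [dist_smul₀, dist_add_left, Real.norm_of_nonneg (by positivity)]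
    exact mul_le_mul_of_nonneg_left (by simpa using hS.dist_le_mul x y) (by positivity)
  have : Nonempty E := ⟨0⟩
  obtain ⟨x, hx⟩ : ∃ x, (1 + ε)⁻¹ • (w + S x) = x := ⟨_, hG.fixedPoint_isFixedPt⟩
  rw [inv_smul_eq_iff₀ hpos.ne'] at hx
  refine ⟨x, ?_⟩
  rw [eq_sub_of_add_eq hx, add_smul, one_smul]
  abel

end Nonexpansive

theorem mem_closure_of_forall_dist_sq_le {α : Type*} [PseudoMetricSpace α] {s : Set α} {w : α}
    (C : ℝ) (h : ∀ ε > 0, ∃ y ∈ s, dist w y ^ 2 ≤ ε * C) : w ∈ closure s := by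
  refine Metric.mem_closure_iff.2 fun δ hδ => ?_
  obtain ⟨y, hy, hdist⟩ := h (δ ^ 2 / (|C| + 1)) (by positivity)
  refine ⟨y, hy, lt_of_pow_lt_pow_left₀ 2 hδ.le (hdist.trans_lt ?_)⟩
  calc δ ^ 2 / (|C| + 1) * C ≤ δ ^ 2 / (|C| + 1) * |C| :=
        mul_le_mul_of_nonneg_left (le_abs_self C) (by positivity)
    _ < δ ^ 2 := by
        rw [div_mul_eq_mul_div, div_lt_iff₀ (by positivity)]
        nlinarith [abs_nonneg C, pow_pos hδ 2]

theorem stmt_10_general {X : Type*} [NormedAddCommGroup X] [InnerProductSpace ℝ X] [CompleteSpace X]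
    (m : ℕ) (T : Fin m → X → X)
    (hT : ∀ i, ∀ x y : X, ‖T i x - T i y‖ ^ 2 ≤ (inner ℝ (x - y) (T i x - T i y) : ℝ))
    (lam : Fin m → ℝ) (hlam : ∀ i, lam i ∈ Set.Ioc (0 : ℝ) 1) (hsum : ∑ i, lam i = 1) :
    closure (Set.range (fun x => x - ∑ i, lam i • T i x)) =
      closure {y : X | ∃ s : Fin m → X,
        (∀ i, s i ∈ Set.range (fun x => x - T i x)) ∧ y = ∑ i, lam i • s i} := by
  have hT' : ∀ i, FirmlyNonexpansive (T i) := hT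
  have hA : ∀ i ∈ univ, FirmlyNonexpansive fun x => x - T i x := fun i _ => (hT' i).id_sub
  have hlam0 : ∀ i ∈ univ, 0 ≤ lam i := fun i _ => (hlam i).1.le
  have hbar : ∀ x, x - ∑ i, lam i • T i x = ∑ i, lam i • (x - T i x) := fun x => by
    simp only [smul_sub, sum_sub_distrib, ← sum_smul, hsum, one_smul]
  have hS : LipschitzWith 1 fun x => ∑ i, lam i • T i x :=
    LipschitzWith.sum_smul_of_sum_eq_one (fun i _ => (hT' i).lipschitzWith) hlam0 hsum
  refine subset_antisymm (closure_mono ?_) (closure_minimal ?_ isClosed_closure)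
  · rintro _ ⟨x, rfl⟩
    exact ⟨fun i => x - T i x, fun i => ⟨x, rfl⟩, hbar x⟩
  rintro _ ⟨s, hs, rfl⟩
  choose z hz using hs
  simp only [← hz]
  refine mem_closure_of_forall_dist_sq_le (∑ i, lam i * (‖z i‖ ^ 2 / 4)) fun ε hε => ?_
  obtain ⟨x, hx⟩ := hS.exists_sub_add_smul_eq hε (∑ i, lam i • (z i - T i (z i)))
  rw [hbar] at hx
  refine ⟨_, ⟨x, rfl⟩, ?_⟩
  have hdist : ∑ i, lam i • (z i - T i (z i)) - (x - ∑ i, lam i • T i x) = ε • x := by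
    rw [← hx, hbar]; abel
  rw [dist_eq_norm, hdist, norm_smul, Real.norm_of_nonneg hε.le, mul_pow, sq ε, mul_assoc]
  exact mul_le_mul_of_nonneg_left (smul_norm_sq_le_of_sum_smul_add_smul_eq hA hlam0 hx) hε.le

theorem stmt_10 {X : Type*} [NormedAddCommGroup X] [InnerProductSpace ℝ X] [CompleteSpace X]
    (m : ℕ) (hm : 2 ≤ m) (T : Fin m → X → X)
    (hT : ∀ i, ∀ x y : X, ‖T i x - T i y‖ ^ 2 ≤ (inner ℝ (x - y) (T i x - T i y) : ℝ))
    (lam : Fin m → ℝ) (hlam : ∀ i, lam i ∈ Set.Ioc (0 : ℝ) 1) (hsum : ∑ i, lam i = 1) :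
    closure (Set.range (fun x => x - ∑ i, lam i • T i x)) =
      closure {y : X | ∃ s : Fin m → X,
        (∀ i, s i ∈ Set.range (fun x => x - T i x)) ∧ y = ∑ i, lam i • s i} :=
  stmt_10_general m T hT lam hlam hsum
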